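/- The Kolmogorov shear profile u(x₂) = sin(x₂) on the circle ℝ/2πℤ satisfies the spectral-gap flow assumption with exponent m = 2: there exist N∈ℕ, c₀>0 and δ₀∈(0,1) such that for every λ∈ℝ and every δ∈(0,δ₀) there exist n≤N points y¹,…,yⁿ∈[0,2π) with |sin(x₂) − λ| > c₀δ² for every x₂∈[0,2π) whose distance on the circle ℝ/2πℤ to each of y¹,…,yⁿ is at least δ. -/

import Mathlib

/-!
With `a = arcsin λ`, the level set `{sin = sin a}` on the circle is `{a, π - a}`, and
`sin x - sin a = -2 sin ((x - a) / 2) sin ((x - (π - a)) / 2)`. Jordan's inequality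
`|sin (t / 2)| ≥ |t| / π` for `|t| ≤ π` bounds each factor below by the circle distance divided
by `π`, so `|sin x - sin a| ≥ 2 d(x, a) d(x, π - a) / π²`. Since `sin (arcsin λ)` is `λ` clamped
to `[-1, 1]` and `sin x` lies there, `|sin x - λ| ≥ |sin x - sin a|`. The two points `a`, `π - a`
thus give `m = 2` with `c₀ = 1 / π²`.
-/

open Set Real

/-- A `2π`-periodic profile `u` satisfies the spectral-gap flow assumption with
exponent `m`: there are `N ∈ ℕ`, `c₀ > 0`, `δ₀ ∈ (0,1)` such that for every level
`λ ∈ ℝ` and every `δ ∈ (0,δ₀)` one can find at most `N` points of the circle so that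
`|u(x₂) − λ| > c₀δ^m` at every point at circle-distance at least `δ` from all of them. -/
def SatisfiesFlowAssumption (u : ℝ → ℝ) (m : ℕ) : Prop :=
  ∃ N : ℕ, ∃ c₀ : ℝ, 0 < c₀ ∧ ∃ δ₀ ∈ Ioo (0:ℝ) 1,
    ∀ lam : ℝ, ∀ δ ∈ Ioo (0:ℝ) δ₀,
      ∃ n ≤ N, ∃ y : Fin n → ℝ, (∀ j, y j ∈ Ico (0:ℝ) (2 * π)) ∧
        ∀ x₂ ∈ Ico (0:ℝ) (2 * π),
          (∀ j, δ ≤ dist ((x₂ : AddCircle (2 * π))) ((y j : AddCircle (2 * π)))) →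
            c₀ * δ ^ m < |u x₂ - lam|

theorem AddCircle.coe_toIcoMod {𝕜 : Type*} [AddCommGroup 𝕜] [LinearOrder 𝕜]
    [IsOrderedAddMonoid 𝕜] [Archimedean 𝕜] {p : 𝕜} (hp : 0 < p) (a b : 𝕜) :
    ((toIcoMod hp a b : 𝕜) : AddCircle p) = b := by
  rw [← self_sub_toIcoDiv_zsmul hp a b, AddCircle.coe_sub, AddCircle.coe_zsmul,
    AddCircle.coe_period, smul_zero, sub_zero]

namespace Real

theorem abs_sin_half_toIcoMod (a s : ℝ) :
    |sin (toIcoMod two_pi_pos a s / 2)| = |sin (s / 2)| := by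
  rw [← self_sub_toIcoDiv_zsmul, zsmul_eq_mul,
    show (s - toIcoDiv two_pi_pos a s * (2 * π)) / 2 = s / 2 - toIcoDiv two_pi_pos a s * π by
      ring,
    sin_sub_int_mul_pi, abs_mul, abs_zpow, abs_neg, abs_one, one_zpow, one_mul]

theorem dist_coe_le_pi_mul_abs_sin_half (x y : ℝ) :
    dist (x : AddCircle (2 * π)) y ≤ π * |sin ((x - y) / 2)| := by
  set t := toIcoMod two_pi_pos (-π) (x - y)
  have ht : |t| ≤ π := by
    obtain ⟨h₁, h₂⟩ := toIcoMod_mem_Ico two_pi_pos (-π) (x - y)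
    exact abs_le.2 ⟨h₁, by linarith⟩
  calc dist (x : AddCircle (2 * π)) y = ‖(t : AddCircle (2 * π))‖ := by
        rw [dist_eq_norm, ← AddCircle.coe_sub, AddCircle.coe_toIcoMod]
    _ = |t| := (AddCircle.norm_coe_eq_abs_iff _ two_pi_pos.ne').2 (by
        rw [abs_of_pos two_pi_pos]; linarith)
    _ = π * (2 / π * |t / 2|) := by
        rw [abs_div, abs_two]; field_simp
    _ ≤ π * |sin (t / 2)| := by
        gcongr
        exact mul_abs_le_abs_sin (by rw [abs_div, abs_two]; linarith)
    _ = π * |sin ((x - y) / 2)| := by rw [abs_sin_half_toIcoMod]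

theorem sin_sub_sin_eq_neg_two_mul_sin_mul_sin (x a : ℝ) :
    sin x - sin a = -2 * sin ((x - a) / 2) * sin ((x - (π - a)) / 2) := by
  rw [sin_sub_sin, show (x - (π - a)) / 2 = -(π / 2 - (x + a) / 2) by ring, sin_neg,
    sin_pi_div_two_sub]
  ring

theorem two_mul_dist_mul_dist_le_abs_sin_sub_sin (x a : ℝ) :
    2 * (dist (x : AddCircle (2 * π)) a * dist (x : AddCircle (2 * π)) (π - a : ℝ)) ≤
      π ^ 2 * |sin x - sin a| := by
  calc 2 * (dist (x : AddCircle (2 * π)) a * dist (x : AddCircle (2 * π)) (π - a : ℝ))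
      ≤ 2 * ((π * |sin ((x - a) / 2)|) * (π * |sin ((x - (π - a)) / 2)|)) := by
        gcongr <;> exact dist_coe_le_pi_mul_abs_sin_half _ _
    _ = π ^ 2 * |sin x - sin a| := by
        rw [sin_sub_sin_eq_neg_two_mul_sin_mul_sin, abs_mul, abs_mul]
        norm_num
        ring

theorem abs_sin_sub_sin_arcsin_le (x lam : ℝ) : |sin x - sin (arcsin lam)| ≤ |sin x - lam| := by
  have h : (-1 : ℝ) ≤ 1 := by norm_num
  calc |sin x - sin (arcsin lam)| = |(projIcc (-1) 1 h (sin x) : ℝ) - projIcc (-1) 1 h lam| := by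
        rw [← arcsin_projIcc, sin_arcsin' (Subtype.mem _),
          projIcc_of_mem h ⟨neg_one_le_sin x, sin_le_one x⟩]
    _ ≤ |sin x - lam| := abs_projIcc_sub_projIcc h

end Real

/-- The Kolmogorov shear profile `u(x₂) = sin(x₂)` satisfies the spectral-gap flow
assumption with exponent `m = 2`. -/
theorem kolmogorov_flow_satisfies_flow_assumption :
    SatisfiesFlowAssumption Real.sin 2 := by
  refine ⟨2, 1 / π ^ 2, by positivity, 1 / 2, by norm_num, fun lam δ hδ => ?_⟩
  set a := arcsin lam
  refine ⟨2, le_rfl, ![toIcoMod two_pi_pos 0 a, toIcoMod two_pi_pos 0 (π - a)], ?_,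
    fun x _ hx => ?_⟩
  · intro j
    fin_cases j <;> exact toIcoMod_mem_Ico' two_pi_pos _
  have h₀ : δ ≤ dist (x : AddCircle (2 * π)) a := by simpa [AddCircle.coe_toIcoMod] using hx 0
  have h₁ : δ ≤ dist (x : AddCircle (2 * π)) (π - a : ℝ) := by
    simpa [AddCircle.coe_toIcoMod] using hx 1
  have hδ₀ : 0 < δ := hδ.1
  rw [one_div_mul_eq_div, div_lt_iff₀' (by positivity)]
  calc δ ^ 2 < 2 * (δ * δ) := by nlinarith
    _ ≤ 2 * (dist (x : AddCircle (2 * π)) a * dist (x : AddCircle (2 * π)) (π - a : ℝ)) := by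
        gcongr
    _ ≤ π ^ 2 * |sin x - sin a| := two_mul_dist_mul_dist_le_abs_sin_sub_sin x a
    _ ≤ π ^ 2 * |sin x - lam| :=
        mul_le_mul_of_nonneg_left (abs_sin_sub_sin_arcsin_le x lam) (sq_nonneg π)
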